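/- arXiv:2206.10723 — 2 statements merged into one kernel-verified Lean document; each statement's English description precedes it below -/
import Mathlib

section
/- Let γ < 1 and let K : ℝ → ℝ be even, continuous and positive definite with K(x) ∼ x^{−1} (log x)^{−γ} as x → ∞. Then, as R → ∞, Cap_K([0,R]) ∼ R / (2 ∫₀^R K(x) dx) ∼ (1−γ) / (2 K(R) (log R)). -/
/-!
Write `P(t) = ∫₀ᵗ K`. The uniform measure on `[a, b]` has potential
`(P(x - a) + P(b - x)) / (b - a)`, and `P` is monotone up to a bounded error because `K` is
eventually positive; hence the uniform measure on `[0, R]` has energy at most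
`2 (P(R) + C) / R`. Conversely, positive definiteness gives `E(μ) ≥ 2 E(μ, ν) - E(ν)`, and testing
`μ` against the uniform measure `ν` on `[-δR, R + δR]` bounds the energy of every probability
measure on `[0, R]` below by `(4 P(δR) - 2 P((1 + 2δ) R) - 6C) / ((1 + 2δ) R)`. Integrating the
asymptotics of `K` gives `P(R) ∼ (log R)^(1-γ) / (1 - γ) ∼ R K(R) log R / (1 - γ)`, so `P` tends
to infinity and is slowly varying, and both bounds are `∼ 2 P(R) / R` once `δ → 0`.
-/

open Filter MeasureTheory

def IsPosDefKernel1 (K : ℝ → ℝ) : Prop :=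
  ∀ (n : ℕ) (x : Fin n → ℝ) (c : Fin n → ℝ),
    0 ≤ ∑ i : Fin n, ∑ j : Fin n, c i * c j * K (x i - x j)

noncomputable def energy1 (K : ℝ → ℝ) (μ : Measure ℝ) : ℝ :=
  ∫ x, ∫ y, K (x - y) ∂μ ∂μ

noncomputable def capacity1 (K : ℝ → ℝ) (D : Set ℝ) : ℝ :=
  (sInf {e : ℝ | ∃ μ : Measure ℝ, IsProbabilityMeasure μ ∧ μ Dᶜ = 0 ∧ e = energy1 K μ})⁻¹

open ProbabilityTheory Asymptotics Set Real Topology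

namespace IsPosDefKernel1

variable {K : ℝ → ℝ}

theorem abs_le (hpd : IsPosDefKernel1 K) (heven : ∀ x, K (-x) = K x) (x : ℝ) :
    |K x| ≤ K 0 := by
  have hsum := hpd 2 ![0, x] ![1, 1]
  have hdiff := hpd 2 ![0, x] ![1, -1]
  simp only [Fin.sum_univ_two, Matrix.cons_val_zero, Matrix.cons_val_one, sub_self, zero_sub,
    sub_zero, heven] at hsum hdiff
  rw [_root_.abs_le]
  constructor <;> linarith

theorem two_mul_sum_le (hpd : IsPosDefKernel1 K) (heven : ∀ x, K (-x) = K x) {n : ℕ}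
    (t c d : Fin n → ℝ) :
    2 * ∑ i, ∑ j, c i * d j * K (t i - t j) ≤
      ∑ i, ∑ j, c i * c j * K (t i - t j) + ∑ i, ∑ j, d i * d j * K (t i - t j) := by
  have hsymm : ∑ i, ∑ j, d i * c j * K (t i - t j) = ∑ i, ∑ j, c i * d j * K (t i - t j) := by
    rw [Finset.sum_comm]
    refine Finset.sum_congr rfl fun i _ => Finset.sum_congr rfl fun j _ => ?_
    rw [← heven, neg_sub, mul_comm (d j)]
  have hnonneg := hpd n t (c - d)
  simp only [Pi.sub_apply, sub_mul, mul_sub, Finset.sum_sub_distrib] at hnonneg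
  linarith

end IsPosDefKernel1

section Energy

variable {K : ℝ → ℝ} {C : ℝ}

noncomputable def potential (K : ℝ → ℝ) (ν : Measure ℝ) (x : ℝ) : ℝ :=
  ∫ y, K (x - y) ∂ν

noncomputable def mutualEnergy (K : ℝ → ℝ) (μ ν : Measure ℝ) : ℝ :=
  ∫ x, potential K ν x ∂μ

theorem energy1_eq_mutualEnergy (μ : Measure ℝ) : energy1 K μ = mutualEnergy K μ μ := rfl

theorem abs_potential_le (hC : ∀ x, |K x| ≤ C) (ν : Measure ℝ) [IsProbabilityMeasure ν]
    (x : ℝ) : |potential K ν x| ≤ C := by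
  simpa [potential] using norm_integral_le_of_norm_le_const (μ := ν) (f := fun y => K (x - y))
    (ae_of_all _ fun y => (Real.norm_eq_abs _).trans_le (hC (x - y)))

theorem abs_energy1_le (hC : ∀ x, |K x| ≤ C) (μ : Measure ℝ) [IsProbabilityMeasure μ] :
    |energy1 K μ| ≤ C := by
  simpa [energy1_eq_mutualEnergy, mutualEnergy] using
    norm_integral_le_of_norm_le_const (μ := μ) (f := potential K μ)
    (ae_of_all _ fun x => (Real.norm_eq_abs _).trans_le (abs_potential_le hC μ x))

theorem continuous_potential (hK : Continuous K) (hC : ∀ x, |K x| ≤ C) (ν : Measure ℝ)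
    [IsFiniteMeasure ν] : Continuous (potential K ν) :=
  continuous_of_dominated
    (fun _ => (hK.comp (continuous_const.sub continuous_id)).aestronglyMeasurable)
    (fun x => ae_of_all _ fun y => hC (x - y)) (integrable_const C)
    (ae_of_all _ fun _ => hK.comp (continuous_id.sub continuous_const))

theorem integrable_potential (hK : Continuous K) (hC : ∀ x, |K x| ≤ C) (μ ν : Measure ℝ)
    [IsFiniteMeasure μ] [IsProbabilityMeasure ν] : Integrable (potential K ν) μ :=
  .of_bound (continuous_potential hK hC ν).aestronglyMeasurable C
    (ae_of_all _ (abs_potential_le hC ν))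

theorem mutualEnergy_le (hK : Continuous K) (hC : ∀ x, |K x| ≤ C) {μ ν : Measure ℝ}
    [IsProbabilityMeasure μ] [IsProbabilityMeasure ν] {s : Set ℝ} (hμ : μ sᶜ = 0) {B : ℝ}
    (hB : ∀ x ∈ s, potential K ν x ≤ B) : mutualEnergy K μ ν ≤ B := by
  calc mutualEnergy K μ ν ≤ ∫ _, B ∂μ :=
        integral_mono_ae (integrable_potential hK hC μ ν) (integrable_const B)
          ((show ∀ᵐ x ∂μ, x ∈ s from mem_ae_iff.2 hμ).mono hB)
    _ = B := by simp

theorem le_mutualEnergy (hK : Continuous K) (hC : ∀ x, |K x| ≤ C) {μ ν : Measure ℝ}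
    [IsProbabilityMeasure μ] [IsProbabilityMeasure ν] {s : Set ℝ} (hμ : μ sᶜ = 0) {B : ℝ}
    (hB : ∀ x ∈ s, B ≤ potential K ν x) : B ≤ mutualEnergy K μ ν := by
  calc B = ∫ _, B ∂μ := by simp
    _ ≤ mutualEnergy K μ ν :=
        integral_mono_ae (integrable_const B) (integrable_potential hK hC μ ν)
          ((show ∀ᵐ x ∂μ, x ∈ s from mem_ae_iff.2 hμ).mono hB)

noncomputable def minEnergy (K : ℝ → ℝ) (D : Set ℝ) : ℝ :=
  sInf {e : ℝ | ∃ μ : Measure ℝ, IsProbabilityMeasure μ ∧ μ Dᶜ = 0 ∧ e = energy1 K μ}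

theorem capacity1_eq_inv_minEnergy (K : ℝ → ℝ) (D : Set ℝ) :
    capacity1 K D = (minEnergy K D)⁻¹ := rfl

theorem minEnergy_le (hC : ∀ x, |K x| ≤ C) {D : Set ℝ} {μ : Measure ℝ} [IsProbabilityMeasure μ]
    (hμ : μ Dᶜ = 0) : minEnergy K D ≤ energy1 K μ :=
  csInf_le ⟨-C, by rintro _ ⟨ν, hν, -, rfl⟩; exact neg_le_of_abs_le (abs_energy1_le hC ν)⟩
    ⟨μ, ‹_›, hμ, rfl⟩

theorem le_minEnergy {D : Set ℝ} (hD : D.Nonempty) {B : ℝ}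
    (hB : ∀ μ : Measure ℝ, IsProbabilityMeasure μ → μ Dᶜ = 0 → B ≤ energy1 K μ) :
    B ≤ minEnergy K D := by
  obtain ⟨x, hx⟩ := hD
  refine le_csInf ⟨_, Measure.dirac x, inferInstance, by simp [hx], rfl⟩ ?_
  rintro _ ⟨μ, hμ, hμD, rfl⟩
  exact hB μ hμ hμD

end Energy

section Discretization

variable {K : ℝ → ℝ} {C : ℝ}

theorem integral_integral_comp_eq_sum {α ι : Type*} [MeasurableSpace α] [Fintype ι]
    [MeasurableSpace ι] [MeasurableSingletonClass ι] {idx : α → ι} (hidx : Measurable idx)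
    (μ ν : Measure α) [IsFiniteMeasure μ] [IsFiniteMeasure ν] (f : ι → ι → ℝ) :
    ∫ x, ∫ y, f (idx x) (idx y) ∂ν ∂μ =
      ∑ i, ∑ j, μ.real (idx ⁻¹' {i}) * ν.real (idx ⁻¹' {j}) * f i j := by
  have hsum (ρ : Measure α) [IsFiniteMeasure ρ] (g : ι → ℝ) :
      ∫ x, g (idx x) ∂ρ = ∑ i, ρ.real (idx ⁻¹' {i}) * g i := by
    rw [← integral_map hidx.aemeasurable Measurable.of_discrete.aestronglyMeasurable,
      integral_fintype .of_finite]
    refine Finset.sum_congr rfl fun i _ => ?_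
    rw [map_measureReal_apply hidx (measurableSet_singleton i), smul_eq_mul]
  simp_rw [fun x => hsum ν (f (idx x))]
  rw [hsum μ fun i => ∑ j, ν.real (idx ⁻¹' {j}) * f i j]
  simp_rw [Finset.mul_sum, mul_assoc]

theorem abs_integral_integral_sub_le {α β : Type*} [MeasurableSpace α] [MeasurableSpace β]
    {μ : Measure α} {ν : Measure β} [IsProbabilityMeasure μ] [IsProbabilityMeasure ν]
    {f g : α → β → ℝ} (hf : Integrable (Function.uncurry f) (μ.prod ν))
    (hg : Integrable (Function.uncurry g) (μ.prod ν)) {ε : ℝ}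
    (hfg : ∀ᵐ p ∂μ.prod ν, |f p.1 p.2 - g p.1 p.2| ≤ ε) :
    |∫ x, ∫ y, f x y ∂ν ∂μ - ∫ x, ∫ y, g x y ∂ν ∂μ| ≤ ε := by
  have hf' := integral_prod _ hf
  have hg' := integral_prod _ hg
  simp only [Function.uncurry_apply_pair] at hf' hg'
  rw [← hf', ← hg', ← integral_sub hf hg]
  simpa [Function.uncurry_def] using
    norm_integral_le_of_norm_le_const (f := fun p : α × β => f p.1 p.2 - g p.1 p.2) hfg

theorem exists_measurable_grid (a b : ℝ) {w : ℝ} (hw : 0 < w) :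
    ∃ (n : ℕ) (idx : ℝ → Fin n) (t : Fin n → ℝ), Measurable idx ∧
      ∀ x ∈ Icc a b, t (idx x) ∈ Icc a x ∧ x - w < t (idx x) := by
  refine ⟨⌊(b - a) / w⌋₊ + 1, fun x => Fin.ofNat _ ⌊(x - a) / w⌋₊, fun j => a + (j : ℕ) * w,
    (Measurable.of_discrete (f := Fin.ofNat _)).comp
      ((measurable_id.sub_const a).div_const w).nat_floor,
    fun x hx => ?_⟩
  have hq : 0 ≤ (x - a) / w := div_nonneg (by linarith [hx.1]) hw.le
  have hlt : ⌊(x - a) / w⌋₊ < ⌊(b - a) / w⌋₊ + 1 :=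
    Nat.lt_succ_of_le (Nat.floor_le_floor (by gcongr; exact hx.2))
  simp only [Fin.val_ofNat, Nat.mod_eq_of_lt hlt]
  have hfloor := Nat.floor_le hq
  have hfloor' := Nat.lt_floor_add_one ((x - a) / w)
  rw [le_div_iff₀ hw] at hfloor
  rw [div_lt_iff₀ hw] at hfloor'
  exact ⟨⟨le_add_of_nonneg_right (by positivity), by linarith⟩, by linarith⟩

theorem abs_mutualEnergy_sub_sum_le (hK : Continuous K) (hC : ∀ x, |K x| ≤ C)
    {μ ν : Measure ℝ} [IsProbabilityMeasure μ] [IsProbabilityMeasure ν] {s : Set ℝ}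
    (hμ : μ sᶜ = 0) (hν : ν sᶜ = 0) {n : ℕ} {idx : ℝ → Fin n} (hidx : Measurable idx)
    (t : Fin n → ℝ) {ε : ℝ}
    (happrox : ∀ x ∈ s, ∀ y ∈ s, |K (x - y) - K (t (idx x) - t (idx y))| ≤ ε) :
    |mutualEnergy K μ ν -
        ∑ i, ∑ j, μ.real (idx ⁻¹' {i}) * ν.real (idx ⁻¹' {j}) * K (t i - t j)| ≤ ε := by
  have hint {g : ℝ × ℝ → ℝ} (hg : Measurable g) : Integrable (fun p => K (g p)) (μ.prod ν) :=
    .of_bound (hK.measurable.comp hg).aestronglyMeasurable C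
      (ae_of_all _ fun _ => (Real.norm_eq_abs _).trans_le (hC _))
  rw [← integral_integral_comp_eq_sum hidx μ ν fun i j => K (t i - t j)]
  refine abs_integral_integral_sub_le (hint (measurable_fst.sub measurable_snd))
    (hint (((measurable_of_finite t).comp (hidx.comp measurable_fst)).sub
      ((measurable_of_finite t).comp (hidx.comp measurable_snd)))) ?_
  filter_upwards [Measure.quasiMeasurePreserving_fst.ae (mem_ae_iff.2 hμ : ∀ᵐ x ∂μ, x ∈ s),
    Measure.quasiMeasurePreserving_snd.ae (mem_ae_iff.2 hν : ∀ᵐ y ∂ν, y ∈ s)] with p hx hy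
  exact happrox _ hx _ hy

/-- Rounding points down to a fine grid turns all three energies into finite quadratic forms in
the masses of the grid cells, to which positive definiteness applies; uniform continuity of `K`
on `[a - b, b - a]` controls the rounding error. -/
theorem IsPosDefKernel1.two_mul_mutualEnergy_le (hpd : IsPosDefKernel1 K)
    (heven : ∀ x, K (-x) = K x) (hK : Continuous K) {a b : ℝ} {μ ν : Measure ℝ}
    [IsProbabilityMeasure μ] [IsProbabilityMeasure ν] (hμ : μ (Icc a b)ᶜ = 0)
    (hν : ν (Icc a b)ᶜ = 0) :
    2 * mutualEnergy K μ ν ≤ energy1 K μ + energy1 K ν := by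
  refine le_of_forall_pos_le_add fun ε hε => ?_
  obtain ⟨δ, hδ, hKδ⟩ := Metric.uniformContinuousOn_iff.1
    ((isCompact_Icc (a := a - b) (b := b - a)).uniformContinuousOn_of_continuous
      hK.continuousOn) (ε / 4) (by positivity)
  obtain ⟨n, idx, t, hidx, ht⟩ := exists_measurable_grid a b (half_pos hδ)
  have happrox : ∀ x ∈ Icc a b, ∀ y ∈ Icc a b,
      |K (x - y) - K (t (idx x) - t (idx y))| ≤ ε / 4 := by
    intro x hx y hy
    obtain ⟨⟨hxa, hxt⟩, hxδ⟩ := ht x hx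
    obtain ⟨⟨hya, hyt⟩, hyδ⟩ := ht y hy
    have hxb := hx.2
    have hyb := hy.2
    rw [← Real.dist_eq]
    refine (hKδ _ ⟨by linarith, by linarith⟩ _ ⟨by linarith, by linarith⟩ ?_).le
    rw [Real.dist_eq, abs_lt]
    constructor <;> linarith
  have hC := hpd.abs_le heven
  have hμμ := abs_mutualEnergy_sub_sum_le hK hC hμ hμ hidx t happrox
  have hνν := abs_mutualEnergy_sub_sum_le hK hC hν hν hidx t happrox
  have hμν := abs_mutualEnergy_sub_sum_le hK hC hμ hν hidx t happrox
  have hQ := hpd.two_mul_sum_le heven t (fun i => μ.real (idx ⁻¹' {i}))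
    (fun i => ν.real (idx ⁻¹' {i}))
  rw [energy1_eq_mutualEnergy, energy1_eq_mutualEnergy]
  rw [_root_.abs_le] at hμμ hνν hμν
  linarith [hμμ.1, hνν.1, hμν.2]

end Discretization

section Uniform

variable {K : ℝ → ℝ} {a b : ℝ}

noncomputable def primitive (K : ℝ → ℝ) (t : ℝ) : ℝ :=
  ∫ x in (0:ℝ)..t, K x

theorem continuous_primitive (hK : Continuous K) : Continuous (primitive K) :=
  intervalIntegral.continuous_primitive (fun _ _ => hK.intervalIntegrable _ _) 0

theorem primitive_neg (heven : ∀ x, K (-x) = K x) (t : ℝ) :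
    primitive K (-t) = -primitive K t := by
  have h := intervalIntegral.integral_comp_neg (a := 0) (b := t) K
  simp only [heven, neg_zero] at h
  rw [primitive, primitive, h, intervalIntegral.integral_symm]

theorem isProbabilityMeasure_cond_Icc (hab : a < b) : IsProbabilityMeasure (volume[|Icc a b]) :=
  cond_isProbabilityMeasure_of_finite (by simp [hab]) (by simp)

theorem cond_Icc_compl : volume[|Icc a b] (Icc a b)ᶜ = 0 := by
  simp [cond_apply measurableSet_Icc]

theorem potential_cond_Icc (heven : ∀ x, K (-x) = K x) (hK : Continuous K) (hab : a < b)
    (x : ℝ) :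
    potential K (volume[|Icc a b]) x = (primitive K (x - a) + primitive K (b - x)) / (b - a) := by
  have hsplit := intervalIntegral.integral_add_adjacent_intervals
    (hK.intervalIntegrable (μ := volume) 0 (x - b)) (hK.intervalIntegrable (x - b) (x - a))
  rw [potential, ProbabilityTheory.cond, integral_smul_measure, integral_Icc_eq_integral_Ioc,
    ← intervalIntegral.integral_of_le hab.le, intervalIntegral.integral_comp_sub_left,
    Real.volume_Icc, ENNReal.toReal_inv, ENNReal.toReal_ofReal (by linarith), smul_eq_mul,
    show b - x = -(x - b) by ring, primitive_neg heven, primitive, primitive]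
  rw [← hsplit]
  field_simp
  ring

end Uniform

section EnergyBounds

variable {K : ℝ → ℝ} {C M : ℝ}

theorem exists_primitive_le_add (hK : Continuous K) (hpos : ∀ᶠ x in atTop, 0 ≤ K x) :
    ∃ C, ∀ t T, 0 ≤ t → t ≤ T → primitive K t ≤ primitive K T + C := by
  obtain ⟨x₀, hx₀⟩ := eventually_atTop.1 hpos
  set X := max x₀ 0
  obtain ⟨B, hB⟩ := (isCompact_Icc (a := 0) (b := X)).exists_bound_of_continuousOn
    (continuous_primitive hK).continuousOn
  have hmono : ∀ s T, X ≤ s → s ≤ T → primitive K s ≤ primitive K T := by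
    intro s T hs hsT
    have hnonneg : 0 ≤ ∫ u in s..T, K u := intervalIntegral.integral_nonneg hsT fun u hu =>
      hx₀ u ((le_max_left x₀ 0).trans (hs.trans hu.1))
    rw [← intervalIntegral.integral_interval_sub_left (hK.intervalIntegrable 0 T)
      (hK.intervalIntegrable 0 s)] at hnonneg
    rw [primitive, primitive]
    linarith
  have hX : 0 ≤ X := le_max_right _ _
  refine ⟨2 * B, fun t T ht htT => ?_⟩
  rcases le_total T X with hTX | hXT
  · have h₁ := abs_le.1 (hB t ⟨ht, htT.trans hTX⟩)
    have h₂ := abs_le.1 (hB T ⟨ht.trans htT, hTX⟩)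
    linarith [h₁.2, h₂.1]
  rcases le_total X t with hXt | htX
  · linarith [hmono t T hXt htT, (abs_nonneg _).trans (hB 0 ⟨le_rfl, hX⟩)]
  · have h₁ := abs_le.1 (hB t ⟨ht, htX⟩)
    have h₂ := abs_le.1 (hB X ⟨hX, le_rfl⟩)
    linarith [h₁.2, h₂.1, hmono X T le_rfl hXT]

variable (hP : ∀ t T, 0 ≤ t → t ≤ T → primitive K t ≤ primitive K T + C)
include hP

theorem energy1_cond_Icc_le (heven : ∀ x, K (-x) = K x) (hK : Continuous K)
    (hM : ∀ x, |K x| ≤ M) {a b : ℝ} (hab : a < b) :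
    energy1 K (volume[|Icc a b]) ≤ 2 * (primitive K (b - a) + C) / (b - a) := by
  have := isProbabilityMeasure_cond_Icc hab
  refine mutualEnergy_le hK hM cond_Icc_compl fun x hx => ?_
  rw [potential_cond_Icc heven hK hab, div_le_div_iff_of_pos_right (by linarith)]
  linarith [hP (x - a) (b - a) (by linarith [hx.1]) (by linarith [hx.2]),
    hP (b - x) (b - a) (by linarith [hx.2]) (by linarith [hx.1])]

theorem minEnergy_Icc_le (heven : ∀ x, K (-x) = K x) (hK : Continuous K)
    (hM : ∀ x, |K x| ≤ M) {R : ℝ} (hR : 0 < R) :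
    minEnergy K (Icc 0 R) ≤ 2 * (primitive K R + C) / R := by
  have := isProbabilityMeasure_cond_Icc hR
  simpa using (minEnergy_le hM cond_Icc_compl).trans (energy1_cond_Icc_le hP heven hK hM hR)

theorem le_minEnergy_Icc (hpd : IsPosDefKernel1 K) (heven : ∀ x, K (-x) = K x)
    (hK : Continuous K) {R δ : ℝ} (hR : 0 < R) (hδ : 0 < δ) :
    (4 * (primitive K (δ * R) - C) - 2 * (primitive K ((1 + 2 * δ) * R) + C)) /
      ((1 + 2 * δ) * R) ≤ minEnergy K (Icc 0 R) := by
  refine le_minEnergy ⟨0, left_mem_Icc.2 hR.le⟩ fun μ _ hμ => ?_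
  set a := -(δ * R)
  set b := R + δ * R
  have hab : a < b := by nlinarith
  have hba : b - a = (1 + 2 * δ) * R := by ring
  have := isProbabilityMeasure_cond_Icc hab
  have hμ' : μ (Icc a b)ᶜ = 0 :=
    measure_mono_null (compl_subset_compl.2 (Icc_subset_Icc (by nlinarith) (by nlinarith))) hμ
  have hmutual : 2 * (primitive K (δ * R) - C) / (b - a) ≤
      mutualEnergy K μ (volume[|Icc a b]) := by
    refine le_mutualEnergy hK (hpd.abs_le heven) hμ fun x hx => ?_
    rw [potential_cond_Icc heven hK hab, div_le_div_iff_of_pos_right (by linarith)]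
    linarith [hP (δ * R) (x - a) (by positivity) (by linarith [hx.1]),
      hP (δ * R) (b - x) (by positivity) (by linarith [hx.2])]
  have hν := energy1_cond_Icc_le hP heven hK (hpd.abs_le heven) hab
  have hpd₂ := hpd.two_mul_mutualEnergy_le heven hK hμ' cond_Icc_compl
  rw [hba] at hmutual hν
  calc _ = 2 * (2 * (primitive K (δ * R) - C) / ((1 + 2 * δ) * R)) -
        2 * (primitive K ((1 + 2 * δ) * R) + C) / ((1 + 2 * δ) * R) := by ring
    _ ≤ energy1 K μ := by linarith

end EnergyBounds

theorem isEquivalent_minEnergy_Icc {K : ℝ → ℝ} (hpd : IsPosDefKernel1 K)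
    (heven : ∀ x, K (-x) = K x) (hK : Continuous K) (hpos : ∀ᶠ x in atTop, 0 ≤ K x)
    (htop : Tendsto (primitive K) atTop atTop)
    (hslow : ∀ c, 0 < c → Tendsto (fun R => primitive K (c * R) / primitive K R) atTop (𝓝 1)) :
    (fun R => minEnergy K (Icc 0 R)) ~[atTop] fun R => 2 * primitive K R / R := by
  obtain ⟨C, hP⟩ := exists_primitive_le_add hK hpos
  have hC : Tendsto (fun R => C / primitive K R) atTop (𝓝 0) := tendsto_const_nhds.div_atTop htop
  have hPpos : ∀ᶠ R in atTop, 0 < R ∧ 0 < primitive K R :=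
    (eventually_gt_atTop 0).and (htop.eventually_gt_atTop 0)
  refine isEquivalent_of_tendsto_one (tendsto_order.2 ⟨fun m hm => ?_, fun m hm => ?_⟩)
  · have hcont : ContinuousAt (fun δ : ℝ => 1 / (1 + 2 * δ)) 0 := by fun_prop (disch := norm_num)
    obtain ⟨δ, hmδ, hδ⟩ := (((hcont.tendsto.mono_left nhdsWithin_le_nhds).eventually
      (lt_mem_nhds (by simpa using hm))).and (self_mem_nhdsWithin (s := Ioi 0))).exists
    have hlim : Tendsto (fun R => (2 * (primitive K (δ * R) / primitive K R) -
        primitive K ((1 + 2 * δ) * R) / primitive K R - 3 * (C / primitive K R)) / (1 + 2 * δ))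
        atTop (𝓝 (1 / (1 + 2 * δ))) := by
      convert ((((hslow δ hδ).const_mul 2).sub (hslow (1 + 2 * δ) (by linarith))).sub
        (hC.const_mul 3)).div_const (1 + 2 * δ) using 2
      norm_num
    filter_upwards [hlim.eventually (lt_mem_nhds hmδ), hPpos] with R hmR ⟨hR, hPR⟩
    refine hmR.trans_le ?_
    have hδ' : (0 : ℝ) < 1 + 2 * δ := by linarith
    calc _ = (4 * (primitive K (δ * R) - C) - 2 * (primitive K ((1 + 2 * δ) * R) + C)) /
          ((1 + 2 * δ) * R) / (2 * primitive K R / R) := by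
          field_simp
          ring
      _ ≤ _ := div_le_div_of_nonneg_right (le_minEnergy_Icc hP hpd heven hK hR hδ)
          (by positivity)
  · filter_upwards [(hC.const_add 1).eventually (gt_mem_nhds (by simpa using hm)), hPpos]
      with R hmR ⟨hR, hPR⟩
    refine lt_of_le_of_lt ?_ hmR
    calc _ ≤ 2 * (primitive K R + C) / R / (2 * primitive K R / R) :=
          div_le_div_of_nonneg_right (minEnergy_Icc_le hP heven hK (hpd.abs_le heven) hR)
            (by positivity)
      _ = 1 + C / primitive K R := by
          field_simp

section Asymptotics

theorem isEquivalent_primitive_of_hasDerivAt {f φ Φ : ℝ → ℝ} {a : ℝ} (hf : Continuous f)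
    (hΦ : ∀ x ∈ Ioi a, HasDerivAt Φ (φ x) x) (hφ : ContinuousOn φ (Ioi a))
    (hφ0 : ∀ᶠ x in atTop, 0 ≤ φ x) (hΦtop : Tendsto Φ atTop atTop) (hfφ : f ~[atTop] φ) :
    primitive f ~[atTop] Φ := by
  refine IsLittleO.isEquivalent (isLittleO_iff.2 fun c hc => ?_)
  obtain ⟨x₁, hx₁⟩ := eventually_atTop.1
    (((hfφ.isLittleO.bound (half_pos hc)).and hφ0).and (eventually_gt_atTop a))
  set D := |primitive f x₁ - Φ x₁| + c / 2 * |Φ x₁| with hDdef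
  filter_upwards [eventually_ge_atTop x₁, hΦtop.eventually_ge_atTop (2 * D / c)] with R hR hΦR
  have hsub : Icc x₁ R ⊆ Ioi a := fun x hx => (hx₁ x₁ le_rfl).2.trans_le hx.1
  have hφint : IntervalIntegrable φ volume x₁ R := (hφ.mono hsub).intervalIntegrable_of_Icc hR
  have hFTC : ∫ x in x₁..R, φ x = Φ R - Φ x₁ :=
    intervalIntegral.integral_eq_sub_of_hasDerivAt
      (fun x hx => hΦ x (hsub (by rwa [uIcc_of_le hR] at hx))) hφint
  have hrem : |∫ x in x₁..R, (f x - φ x)| ≤ c / 2 * (Φ R - Φ x₁) := by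
    rw [← hFTC, ← intervalIntegral.integral_const_mul, ← Real.norm_eq_abs]
    refine intervalIntegral.norm_integral_le_of_norm_le hR (ae_of_all _ fun x hx => ?_)
      (hφint.const_mul _)
    obtain ⟨⟨hbound, hφx⟩, -⟩ := hx₁ x hx.1.le
    simpa [Real.norm_eq_abs, abs_of_nonneg hφx] using hbound
  have hsplit : primitive f R - Φ R = (primitive f x₁ - Φ x₁) + ∫ x in x₁..R, (f x - φ x) := by
    rw [intervalIntegral.integral_sub (hf.intervalIntegrable _ _) hφint, hFTC, primitive,
      primitive, ← intervalIntegral.integral_add_adjacent_intervals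
        (hf.intervalIntegrable 0 x₁) (hf.intervalIntegrable x₁ R)]
    ring
  have hD : D ≤ c / 2 * Φ R := by
    rw [div_le_iff₀ hc] at hΦR
    linarith
  rw [Pi.sub_apply, hsplit, Real.norm_eq_abs, Real.norm_eq_abs]
  calc _ ≤ |primitive f x₁ - Φ x₁| + |∫ x in x₁..R, (f x - φ x)| := abs_add_le _ _
    _ ≤ |primitive f x₁ - Φ x₁| + c / 2 * (Φ R - Φ x₁) := by gcongr
    _ ≤ c * |Φ R| := by
      have h₁ : -(c / 2 * Φ x₁) ≤ c / 2 * |Φ x₁| := by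
        rw [← mul_neg]; gcongr; exact neg_le_abs _
      have h₂ : c * Φ R ≤ c * |Φ R| := by gcongr; exact le_abs_self _
      linarith

theorem isEquivalent_log_mul_rpow {c : ℝ} (hc : 0 < c) (r : ℝ) :
    (fun R => log (c * R) ^ r) ~[atTop] fun R => log R ^ r := by
  have hlog : (fun R => log (c * R)) ~[atTop] fun R => |log R| := by
    refine ((IsEquivalent.refl.const_add_of_norm_tendsto_atTop (c := log c)
      (tendsto_norm_atTop_atTop.comp tendsto_log_atTop)).congr_left ?_).congr_right ?_
    · filter_upwards [eventually_gt_atTop 0] with R hR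
      rw [log_mul hc.ne' hR.ne']
    · filter_upwards [eventually_ge_atTop 1] with R hR
      rw [abs_of_nonneg (log_nonneg hR)]
  refine (hlog.rpow (fun R => abs_nonneg (log R))).congr_right ?_
  filter_upwards [eventually_ge_atTop 1] with R hR
  simp only [Pi.pow_apply, abs_of_nonneg (log_nonneg hR)]

theorem hasDerivAt_log_rpow_div {γ x : ℝ} (hγ : γ ≠ 1) (hx : 1 < x) :
    HasDerivAt (fun y => log y ^ (1 - γ) / (1 - γ)) (x⁻¹ * log x ^ (-γ)) x := by
  refine (((hasDerivAt_rpow_const (p := 1 - γ) (Or.inl (log_pos hx).ne')).comp x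
    (hasDerivAt_log (by linarith))).div_const (1 - γ)).congr_deriv ?_
  rw [show 1 - γ - 1 = -γ by ring]
  field_simp [sub_ne_zero.2 hγ.symm]

theorem continuousOn_inv_mul_log_rpow (γ : ℝ) :
    ContinuousOn (fun x => x⁻¹ * log x ^ (-γ)) (Ioi 1) := fun x hx =>
  ((continuousAt_inv₀ (by linarith [mem_Ioi.1 hx])).mul ((continuousAt_log
    (by linarith [mem_Ioi.1 hx])).rpow_const (Or.inl (log_pos hx).ne'))).continuousWithinAt

theorem eventually_pos_inv_mul_log_rpow (γ : ℝ) :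
    ∀ᶠ x : ℝ in atTop, 0 < x⁻¹ * log x ^ (-γ) :=
  (eventually_gt_atTop 1).mono fun x hx =>
    mul_pos (inv_pos.2 (by linarith)) (rpow_pos_of_pos (log_pos hx) _)

theorem tendsto_log_rpow_div_atTop {γ : ℝ} (hγ : γ < 1) :
    Tendsto (fun R => log R ^ (1 - γ) / (1 - γ)) atTop atTop :=
  ((tendsto_rpow_atTop (by linarith)).comp tendsto_log_atTop).atTop_div_const (by linarith)

theorem tendsto_apply_mul_div_apply_of_isEquivalent_log_rpow {f : ℝ → ℝ} {r d : ℝ}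
    (hf : f ~[atTop] fun R => log R ^ r / d) (hf0 : ∀ᶠ R in atTop, f R ≠ 0) {c : ℝ}
    (hc : 0 < c) : Tendsto (fun R => f (c * R) / f R) atTop (𝓝 1) :=
  (isEquivalent_iff_tendsto_one hf0).1 (((hf.comp_tendsto (tendsto_id.const_mul_atTop hc)).trans
    ((isEquivalent_log_mul_rpow hc r).div IsEquivalent.refl)).trans hf.symm)

theorem isEquivalent_primitive_log_rpow {K : ℝ → ℝ} {γ : ℝ} (hγ : γ < 1) (hK : Continuous K)
    (hKφ : K ~[atTop] fun x => x⁻¹ * log x ^ (-γ)) :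
    primitive K ~[atTop] fun R => log R ^ (1 - γ) / (1 - γ) :=
  isEquivalent_primitive_of_hasDerivAt hK (fun _ hx => hasDerivAt_log_rpow_div hγ.ne hx)
    (continuousOn_inv_mul_log_rpow γ) ((eventually_pos_inv_mul_log_rpow γ).mono fun _ h => h.le)
    (tendsto_log_rpow_div_atTop hγ) hKφ

theorem isEquivalent_primitive_mul_log {K : ℝ → ℝ} {γ : ℝ} (hγ : γ < 1) (hK : Continuous K)
    (hKφ : K ~[atTop] fun x => x⁻¹ * log x ^ (-γ)) :
    primitive K ~[atTop] fun R => R * K R * log R / (1 - γ) := by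
  refine (isEquivalent_primitive_log_rpow hγ hK hKφ).trans
    ((((IsEquivalent.refl (u := fun R => R * log R / (1 - γ))).mul hKφ.symm).congr_left
      ?_).congr_right ?_)
  · filter_upwards [eventually_gt_atTop 1] with R hR
    rw [Pi.mul_apply, show 1 - γ = 1 + -γ by ring, rpow_add (log_pos hR), rpow_one]
    field_simp
  · filter_upwards with R
    simp only [Pi.mul_apply]
    ring

end Asymptotics

/-- if `γ < 1` and `K : ℝ → ℝ` is even, continuous, positive definite with
`K(x) ∼ x⁻¹ (log x)^(-γ)` as `x → ∞`, then
`Cap_K([0,R]) ∼ R / (2 ∫₀^R K(x) dx) ∼ (1-γ) / (2 K(R) log R)` as `R → ∞`. -/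
theorem statement8 (γ : ℝ) (hγ : γ < 1) (K : ℝ → ℝ)
    (heven : ∀ x, K (-x) = K x) (hcont : Continuous K) (hpd : IsPosDefKernel1 K)
    (hasymp : Tendsto (fun x => K x / (x⁻¹ * Real.log x ^ (-γ))) atTop (nhds 1)) :
    Tendsto (fun R =>
        capacity1 K (Set.Icc 0 R) / (R / (2 * ∫ x in (0:ℝ)..R, K x))) atTop (nhds 1)
    ∧ Tendsto (fun R =>
        capacity1 K (Set.Icc 0 R) / ((1 - γ) / (2 * K R * Real.log R))) atTop (nhds 1) := by
  have hKφ : K ~[atTop] fun x => x⁻¹ * log x ^ (-γ) := isEquivalent_of_tendsto_one hasymp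
  have hKpos := hKφ.eventually_pos (eventually_pos_inv_mul_log_rpow γ)
  have hPΦ := isEquivalent_primitive_log_rpow hγ hcont hKφ
  have htop := hPΦ.symm.tendsto_atTop (tendsto_log_rpow_div_atTop hγ)
  have hcap : (fun R => capacity1 K (Icc 0 R)) ~[atTop] fun R => R / (2 * primitive K R) := by
    simpa only [capacity1_eq_inv_minEnergy, Pi.inv_def, inv_div] using
      (isEquivalent_minEnergy_Icc hpd heven hcont (hKpos.mono fun _ h => h.le) htop
        fun c hc => tendsto_apply_mul_div_apply_of_isEquivalent_log_rpow hPΦ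
          (htop.eventually_ne_atTop 0) hc).inv
  have hrate : (fun R => R / (2 * primitive K R)) ~[atTop]
      fun R => (1 - γ) / (2 * K R * log R) := by
    refine (IsEquivalent.refl.div (IsEquivalent.refl.mul
      (isEquivalent_primitive_mul_log hγ hcont hKφ))).congr_right ?_
    filter_upwards [eventually_gt_atTop 0] with R hR
    simp only [Pi.div_apply, Pi.mul_apply]
    field_simp
  refine ⟨(isEquivalent_iff_tendsto_one ?_).1 hcap,
    (isEquivalent_iff_tendsto_one ?_).1 (hcap.trans hrate)⟩
  · filter_upwards [eventually_gt_atTop 0, htop.eventually_gt_atTop 0] with R hR hPR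
    positivity
  · filter_upwards [eventually_gt_atTop 1, hKpos] with R hR hKR
    have := log_pos hR
    have : 0 < 1 - γ := by linarith
    positivity
end

section
/- For every dimension d ≥ 1 there exists a constant c ≥ 1, depending only on d, such that for every R, M, L ≥ 6√d the following holds: setting n = ⌊R/(6ML)⌋, for each k = 1,…,n there exist points z^k_1, …, z^k_{m_k} in ℝ^d with m_k ≤ c (R/L)^{d−1} such that: (1) for all k₁ ≠ k₂ and all i, j, the Euclidean distance between z^{k₁}_i + A^∞(L) and z^{k₂}_j + A^∞(L) is at least (M − 4√d) L |k₁ − k₂|; (2) every continuous path γ : [0,1] → ℝ^d whose image intersects both the sphere ∂B(1) and the sphere ∂B(R) crosses, for each k = 1,…,n, at least one of the annuli z^k_i + A^∞(L). -/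
/-!
The `k`-th family consists of the translates of `A^∞(L)` centred at the points of the grid
`(2L/√d) ℤ^d` within distance `L` of the sphere `∂B(r_k)`, `r_k = 6(k+1)ML`. Radii of different
families differ by multiples of `6ML`, while an annulus has Euclidean radius at most `2√d L`: this
gives the separation. A path from `∂B(1)` to `∂B(R)` meets `∂B(r_k)` at some `x`; rounding `x` to
the grid gives a centre `z` with `x ∈ z + Λ_{L/√d}`, while the starting point of the path lies
outside `z + Λ_{2L}`, so the path crosses `z + A^∞(L)`. For the count, fix the coordinate `j` of
largest modulus of a grid point and all other coordinates: then `|v_j| ≥ ‖v‖/√d` while `v_j²`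
varies in an interval of length `O(√d ‖v‖)`, which leaves `O(d)` choices for `v_j` and
`O(d²) (√d R/L)^{d-1}` centres in all.
-/

/-- The cube `Λ_R = [-R,R]^d ⊂ ℝ^d`. -/
def cubeSet (d : ℕ) (R : ℝ) : Set (EuclideanSpace ℝ (Fin d)) :=
  {x | ∀ i : Fin d, |x i| ≤ R}

/-- The sup-norm annulus `A^∞(R) = Λ_{2R} \ Λ_{R/√d}`. -/
def annulusSet (d : ℕ) (R : ℝ) : Set (EuclideanSpace ℝ (Fin d)) :=
  cubeSet d (2 * R) \ cubeSet d (R / Real.sqrt d)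

/-- A set `Γ` (the image of a path) crosses the translated annulus `z + A^∞(R)` if it
intersects both `z + ∂Λ_{R/√d}` and `z + ∂Λ_{2R}`. -/
def Crosses (d : ℕ) (Γ : Set (EuclideanSpace ℝ (Fin d)))
    (z : EuclideanSpace ℝ (Fin d)) (R : ℝ) : Prop :=
  (Γ ∩ ((fun w => z + w) '' frontier (cubeSet d (R / Real.sqrt d)))).Nonempty ∧
  (Γ ∩ ((fun w => z + w) '' frontier (cubeSet d (2 * R)))).Nonempty

open Metric Finset

variable {d : ℕ}

lemma norm_le_sqrt_mul_norm_ofLp (x : EuclideanSpace ℝ (Fin d)) : ‖x‖ ≤ √d * ‖x.ofLp‖ := by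
  rw [EuclideanSpace.norm_eq, ← Real.sqrt_sq (norm_nonneg x.ofLp), ← Real.sqrt_mul d.cast_nonneg]
  refine Real.sqrt_le_sqrt ?_
  calc ∑ i, ‖x i‖ ^ 2 ≤ ∑ _i : Fin d, ‖x.ofLp‖ ^ 2 :=
        sum_le_sum fun i _ => pow_le_pow_left₀ (norm_nonneg _) (norm_le_pi_norm x.ofLp i) 2
    _ = d * ‖x.ofLp‖ ^ 2 := by simp

lemma cubeSet_eq_preimage_closedBall {a : ℝ} (ha : 0 ≤ a) :
    cubeSet d a = WithLp.ofLp ⁻¹' closedBall 0 a := by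
  ext x
  simp [cubeSet, pi_norm_le_iff_of_nonneg ha, Real.norm_eq_abs]

lemma frontier_cubeSet {a : ℝ} (ha : 0 < a) :
    frontier (cubeSet d a) = WithLp.ofLp ⁻¹' sphere 0 a := by
  rw [cubeSet_eq_preimage_closedBall ha.le, ← frontier_closedBall _ ha.ne']
  exact ((EuclideanSpace.equiv (Fin d) ℝ).toHomeomorph.preimage_frontier _).symm

lemma norm_le_of_mem_annulusSet {L : ℝ} (hL : 0 ≤ L) {w : EuclideanSpace ℝ (Fin d)}
    (hw : w ∈ annulusSet d L) : ‖w‖ ≤ 2 * √d * L := by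
  have hw' : ‖w.ofLp‖ ≤ 2 * L := by
    simpa [cubeSet_eq_preimage_closedBall (by positivity : 0 ≤ 2 * L)] using hw.1
  calc ‖w‖ ≤ √d * ‖w.ofLp‖ := norm_le_sqrt_mul_norm_ofLp w
    _ ≤ √d * (2 * L) := by gcongr
    _ = 2 * √d * L := by ring

lemma IsPreconnected.inter_image_add_frontier_cubeSet_nonempty
    {Γ : Set (EuclideanSpace ℝ (Fin d))} (hΓ : IsPreconnected Γ) {z p q : EuclideanSpace ℝ (Fin d)}
    {a : ℝ} (ha : 0 < a) (hp : p ∈ Γ) (hq : q ∈ Γ) (hpz : ‖(p - z).ofLp‖ ≤ a)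
    (hqz : a ≤ ‖(q - z).ofLp‖) :
    (Γ ∩ (fun w => z + w) '' frontier (cubeSet d a)).Nonempty := by
  obtain ⟨x, hx, hxa⟩ := hΓ.intermediate_value hp hq
    (f := fun x => ‖(x - z).ofLp‖) (by fun_prop) ⟨hpz, hqz⟩
  refine ⟨x, hx, x - z, ?_, add_sub_cancel _ _⟩
  rw [frontier_cubeSet ha]
  simpa using hxa

lemma crosses_of_isPreconnected (hd : 1 ≤ d) {Γ : Set (EuclideanSpace ℝ (Fin d))}
    (hΓ : IsPreconnected Γ) {z p q : EuclideanSpace ℝ (Fin d)} {L : ℝ} (hL : 0 < L)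
    (hp : p ∈ Γ) (hq : q ∈ Γ) (hpz : ‖(p - z).ofLp‖ ≤ L / √d) (hqz : 2 * L ≤ ‖(q - z).ofLp‖) :
    Crosses d Γ z L := by
  have hsd : 1 ≤ √(d : ℝ) := Real.one_le_sqrt.2 (by exact_mod_cast hd)
  have h : L / √d ≤ 2 * L := (div_le_self hL.le hsd).trans (by linarith)
  exact ⟨hΓ.inter_image_add_frontier_cubeSet_nonempty (by positivity) hp hq hpz (h.trans hqz),
    hΓ.inter_image_add_frontier_cubeSet_nonempty (by positivity) hp hq (hpz.trans h) hqz⟩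

lemma Int.card_le_of_forall_sub_le {S : Finset ℤ} {D : ℝ} (hD : 0 ≤ D)
    (hS : ∀ x ∈ S, ∀ y ∈ S, ((x - y : ℤ) : ℝ) ≤ D) : (#S : ℝ) ≤ D + 1 := by
  rcases S.eq_empty_or_nonempty with rfl | hne
  · simp; linarith
  have hsub : S ⊆ Icc (S.min' hne) (S.min' hne + ⌊D⌋) := fun x hx =>
    mem_Icc.2 ⟨S.min'_le x hx, by
      have := Int.le_floor.2 (hS x hx _ (S.min'_mem hne)); linarith⟩
  calc (#S : ℝ) ≤ #(Icc (S.min' hne) (S.min' hne + ⌊D⌋)) := by exact_mod_cast card_le_card hsub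
    _ = ⌊D⌋ + 1 := by
      rw [Int.card_Icc, show S.min' hne + ⌊D⌋ + 1 - S.min' hne = ⌊D⌋ + 1 by ring,
        ← Int.cast_natCast, Int.toNat_of_nonneg (by positivity)]
      push_cast; ring
    _ ≤ D + 1 := by linarith [Int.floor_le D]

-- `||m| - |m'|| ≤ |m² - m'²| / (|m| + |m'|) ≤ δ / (2ρ)`
lemma Int.card_le_of_sq_sub_sq_le {S : Finset ℤ} {ρ δ : ℝ} (hρ : 0 < ρ) (hδ : 0 ≤ δ)
    (hS : ∀ m ∈ S, ρ ≤ |(m : ℝ)|) (hSδ : ∀ m ∈ S, ∀ m' ∈ S, (m : ℝ) ^ 2 - (m' : ℝ) ^ 2 ≤ δ) :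
    (#S : ℝ) ≤ δ / ρ + 2 := by
  have hfiber : #S ≤ 2 * #(S.image abs) := by
    refine card_le_mul_card_image S 2 fun k hk => ?_
    obtain ⟨m₀, -, rfl⟩ := mem_image.1 hk
    calc #{m ∈ S | |m| = |m₀|} ≤ #{m₀, -m₀} := card_le_card fun m hm => by
          rcases abs_eq_abs.1 (mem_filter.1 hm).2 with h | h <;> simp [h]
      _ ≤ 2 := card_le_two
  have himage : (#(S.image abs) : ℝ) ≤ δ / (2 * ρ) + 1 := by
    refine Int.card_le_of_forall_sub_le (by positivity) ?_
    simp only [mem_image]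
    rintro _ ⟨m, hm, rfl⟩ _ ⟨m', hm', rfl⟩
    rw [le_div_iff₀ (by positivity)]
    have h₁ := hS m hm
    have h₂ := hS m' hm'
    have h₃ := hSδ m hm m' hm'
    push_cast
    rw [← sq_abs (m : ℝ), ← sq_abs (m' : ℝ)] at h₃
    nlinarith
  calc (#S : ℝ) ≤ 2 * #(S.image abs) := by exact_mod_cast hfiber
    _ ≤ 2 * (δ / (2 * ρ) + 1) := by gcongr
    _ = δ / ρ + 2 := by field_simp

noncomputable def intPoint (v : Fin d → ℤ) : EuclideanSpace ℝ (Fin d) :=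
  WithLp.toLp 2 fun i => (v i : ℝ)

lemma norm_intPoint_sq (v : Fin d → ℤ) : ‖intPoint v‖ ^ 2 = ∑ i, (v i : ℝ) ^ 2 := by
  simp [EuclideanSpace.real_norm_sq_eq, intPoint]

lemma abs_le_norm_intPoint (v : Fin d → ℤ) (i : Fin d) : |(v i : ℝ)| ≤ ‖intPoint v‖ := by
  simpa [intPoint] using PiLp.norm_apply_le (intPoint v) i

noncomputable def latticeShell (d : ℕ) (a b : ℝ) : Finset (Fin d → ℤ) :=
  {v ∈ Fintype.piFinset fun _ => Icc (-⌊b⌋) ⌊b⌋ | a ≤ ‖intPoint v‖ ∧ ‖intPoint v‖ ≤ b}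

lemma mem_latticeShell {a b : ℝ} {v : Fin d → ℤ} :
    v ∈ latticeShell d a b ↔ a ≤ ‖intPoint v‖ ∧ ‖intPoint v‖ ≤ b := by
  refine ⟨fun h => (mem_filter.1 h).2,
    fun h => mem_filter.2 ⟨Fintype.mem_piFinset.2 fun i => ?_, h⟩⟩
  refine mem_Icc.2 (abs_le.1 (Int.le_floor.2 ?_))
  push_cast
  exact (abs_le_norm_intPoint v i).trans h.2

lemma card_le_of_eq_off_maxCoord {a b : ℝ} (ha : 0 < a) (hab : a ≤ b) {F : Finset (Fin d → ℤ)}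
    (j : Fin d) (hF : ∀ v ∈ F, v ∈ latticeShell d a b ∧ ∀ i, |v i| ≤ |v j|)
    (hFj : ∀ v ∈ F, ∀ v' ∈ F, ∀ i ≠ j, v i = v' i) :
    (#F : ℝ) ≤ (b ^ 2 - a ^ 2) * √d / a + 2 := by
  have hinj : Set.InjOn (fun v : Fin d → ℤ => v j) F := fun v hv v' hv' hvj => funext fun i => by
    by_cases hij : i = j
    · subst hij; exact hvj
    · exact hFj v hv v' hv' i hij
  have hsd : 0 < √(d : ℝ) := Real.sqrt_pos.2 (by exact_mod_cast j.pos)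
  rw [← card_image_of_injOn hinj, ← div_div_eq_mul_div]
  refine Int.card_le_of_sq_sub_sq_le (div_pos ha hsd) (by nlinarith) ?_ ?_ <;>
    simp only [mem_image] <;> intro
  · rintro ⟨v, hv, rfl⟩
    obtain ⟨hv, hmax⟩ := hF v hv
    have hsup : ‖(intPoint v).ofLp‖ ≤ |(v j : ℝ)| :=
      (pi_norm_le_iff_of_nonneg (abs_nonneg _)).2 fun i => by
        simpa [intPoint, ← Int.cast_abs] using hmax i
    rw [div_le_iff₀' hsd]
    exact ((mem_latticeShell.1 hv).1.trans (norm_le_sqrt_mul_norm_ofLp _)).trans (by gcongr)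
  · rintro ⟨v, hv, rfl⟩ _ ⟨v', hv', rfl⟩
    have hsplit (u : Fin d → ℤ) :
        ‖intPoint u‖ ^ 2 = (u j : ℝ) ^ 2 + ∑ i : {i // i ≠ j}, (u i : ℝ) ^ 2 := by
      rw [norm_intPoint_sq, Fintype.sum_eq_add_sum_subtype_ne _ j]
    have hrest : ∑ i : {i // i ≠ j}, (v i : ℝ) ^ 2 = ∑ i : {i // i ≠ j}, (v' i : ℝ) ^ 2 :=
      Fintype.sum_congr _ _ fun i => by rw [hFj v hv v' hv' i i.2]
    obtain ⟨h₁, -⟩ := mem_latticeShell.1 (hF v' hv').1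
    obtain ⟨-, h₂⟩ := mem_latticeShell.1 (hF v hv).1
    have h₁' := pow_le_pow_left₀ ha.le h₁ 2
    have h₂' := pow_le_pow_left₀ (norm_nonneg _) h₂ 2
    linarith [hsplit v, hsplit v']

lemma card_image_restrict_latticeShell_le {a b : ℝ} (hb : 0 ≤ b) (j : Fin d) :
    (#((latticeShell d a b).image fun v (i : {i // i ≠ j}) => v i) : ℝ) ≤
      (2 * b + 1) ^ (d - 1) := by
  have hsub : (latticeShell d a b).image (fun v (i : {i // i ≠ j}) => v i) ⊆
      Fintype.piFinset fun _ => Icc (-⌊b⌋) ⌊b⌋ := by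
    simp only [subset_iff, mem_image, Fintype.mem_piFinset]
    rintro _ ⟨v, hv, rfl⟩ i
    exact Fintype.mem_piFinset.1 (mem_filter.1 hv).1 i
  have hfloor : (0 : ℤ) ≤ ⌊b⌋ := Int.floor_nonneg.2 hb
  calc (#((latticeShell d a b).image fun v (i : {i // i ≠ j}) => v i) : ℝ)
      ≤ #(Fintype.piFinset fun (_ : {i // i ≠ j}) => Icc (-⌊b⌋) ⌊b⌋) := by
        exact_mod_cast card_le_card hsub
    _ = (2 * ⌊b⌋ + 1 : ℤ) ^ (d - 1) := by
      rw [Fintype.card_piFinset, prod_const, Int.card_Icc, card_univ,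
        show ⌊b⌋ + 1 - -⌊b⌋ = 2 * ⌊b⌋ + 1 by ring]
      rw [Nat.cast_pow, ← Int.cast_natCast, Int.toNat_of_nonneg (by omega)]
      simp
    _ ≤ (2 * b + 1) ^ (d - 1) := by
      push_cast
      gcongr
      exact Int.floor_le b

theorem card_latticeShell_le (hd : 1 ≤ d) {a b : ℝ} (ha : 0 < a) (hab : a ≤ b) :
    (#(latticeShell d a b) : ℝ) ≤ d * ((b ^ 2 - a ^ 2) * √d / a + 2) * (2 * b + 1) ^ (d - 1) := by
  set S := latticeShell d a b
  set K := (b ^ 2 - a ^ 2) * √d / a + 2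
  have hK : 0 ≤ K := by
    have : 0 ≤ b ^ 2 - a ^ 2 := by nlinarith
    positivity
  have hcover : S ⊆ univ.biUnion fun j => {v ∈ S | ∀ i, |v i| ≤ |v j|} := fun v hv => by
    obtain ⟨j, -, hj⟩ := exists_max_image univ (fun i => |v i|) ⟨⟨0, hd⟩, mem_univ _⟩
    exact mem_biUnion.2 ⟨j, mem_univ j, mem_filter.2 ⟨hv, fun i => hj i (mem_univ i)⟩⟩
  have hmax (j : Fin d) : (#{v ∈ S | ∀ i, |v i| ≤ |v j|} : ℝ) ≤ K * (2 * b + 1) ^ (d - 1) := by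
    rw [card_eq_sum_card_image (fun v (i : {i // i ≠ j}) => v i)]
    push_cast
    calc _ ≤ ∑ _w ∈ {v ∈ S | ∀ i, |v i| ≤ |v j|}.image (fun v (i : {i // i ≠ j}) => v i), K := by
          refine sum_le_sum fun w _ => card_le_of_eq_off_maxCoord ha hab j ?_ ?_
          · simp only [mem_filter]
            exact fun v hv => ⟨hv.1.1, hv.1.2⟩
          · simp only [mem_filter]
            rintro v ⟨-, hv⟩ v' ⟨-, hv'⟩ i hi
            exact congrFun (hv.trans hv'.symm) ⟨i, hi⟩
      _ = K * #({v ∈ S | ∀ i, |v i| ≤ |v j|}.image (fun v (i : {i // i ≠ j}) => v i)) := by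
          rw [sum_const, nsmul_eq_mul, mul_comm]
      _ ≤ K * (2 * b + 1) ^ (d - 1) := by
          gcongr
          refine le_trans ?_ (card_image_restrict_latticeShell_le (a := a) (ha.le.trans hab) j)
          exact_mod_cast card_le_card (image_subset_image (filter_subset _ _))
  calc (#S : ℝ) ≤ ∑ j : Fin d, (#{v ∈ S | ∀ i, |v i| ≤ |v j|} : ℝ) := by
        exact_mod_cast (card_le_card hcover).trans card_biUnion_le
    _ ≤ ∑ _j : Fin d, K * (2 * b + 1) ^ (d - 1) := sum_le_sum fun j _ => hmax j
    _ = d * K * (2 * b + 1) ^ (d - 1) := by simp [mul_assoc]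

open Classical in
noncomputable def shellCentres (d : ℕ) (L r : ℝ) : Finset (EuclideanSpace ℝ (Fin d)) :=
  (latticeShell d ((r - L) / (2 * L / √d)) ((r + L) / (2 * L / √d))).image
    fun v => (2 * L / √d) • intPoint v

section shellCentres

variable {L r : ℝ}

lemma mem_shellCentres (hd : 1 ≤ d) (hL : 0 < L) {z : EuclideanSpace ℝ (Fin d)} :
    z ∈ shellCentres d L r ↔
      ∃ v, (2 * L / √d) • intPoint v = z ∧ r - L ≤ ‖z‖ ∧ ‖z‖ ≤ r + L := by
  have hs : 0 < 2 * L / √d := div_pos (by linarith) (Real.sqrt_pos.2 (by exact_mod_cast hd))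
  simp only [shellCentres, mem_image, mem_latticeShell, div_le_iff₀ hs, le_div_iff₀ hs]
  refine exists_congr fun v => and_comm.trans (and_congr_right fun hz => ?_)
  rw [← hz, norm_smul, Real.norm_of_nonneg hs.le, mul_comm (2 * L / √d)]

lemma norm_ofLp_sub_smul_intPoint_round_le {s : ℝ} (hs : 0 < s) (x : EuclideanSpace ℝ (Fin d)) :
    ‖(x - s • intPoint fun i => round (x i / s)).ofLp‖ ≤ s / 2 := by
  refine (pi_norm_le_iff_of_nonneg (by positivity)).2 fun i => ?_
  have h := abs_sub_round (x i / s)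
  calc ‖(x - s • intPoint fun i => round (x i / s)).ofLp i‖
      = s * |x i / s - round (x i / s)| := by
        simp only [intPoint, WithLp.ofLp_sub, WithLp.ofLp_smul, Pi.sub_apply, Pi.smul_apply,
          smul_eq_mul, Real.norm_eq_abs]
        rw [← abs_of_pos hs, ← abs_mul, abs_of_pos hs, mul_sub, mul_div_cancel₀ _ hs.ne']
    _ ≤ s / 2 := by nlinarith

lemma exists_mem_shellCentres_norm_ofLp_sub_le (hd : 1 ≤ d) (hL : 0 < L)
    {x : EuclideanSpace ℝ (Fin d)} (hx : ‖x‖ = r) :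
    ∃ z ∈ shellCentres d L r, ‖(x - z).ofLp‖ ≤ L / √d := by
  have hsd : 0 < √(d : ℝ) := Real.sqrt_pos.2 (by exact_mod_cast hd)
  have hs : 0 < 2 * L / √d := by positivity
  set z := (2 * L / √d) • intPoint fun i => round (x i / (2 * L / √d))
  have hxz : ‖(x - z).ofLp‖ ≤ L / √d :=
    (norm_ofLp_sub_smul_intPoint_round_le hs x).trans_eq (by ring)
  have hdist : ‖x - z‖ ≤ L := calc
    ‖x - z‖ ≤ √d * ‖(x - z).ofLp‖ := norm_le_sqrt_mul_norm_ofLp _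
    _ ≤ √d * (L / √d) := by gcongr
    _ = L := by field_simp
  refine ⟨z, (mem_shellCentres hd hL).2 ⟨_, rfl, ?_, ?_⟩, hxz⟩ <;>
    linarith [norm_sub_norm_le x z, norm_sub_norm_le z x, norm_sub_rev x z]

lemma card_shellCentres_le (hd : 1 ≤ d) (hL : 0 < L) (hr : 2 * L ≤ r) :
    (#(shellCentres d L r) : ℝ) ≤ d * (4 * d + 2) * (3 * √d * r / L) ^ (d - 1) := by
  have hsd : 1 ≤ √(d : ℝ) := Real.one_le_sqrt.2 (by exact_mod_cast hd)
  have hsd2 : √(d : ℝ) ^ 2 = d := Real.sq_sqrt d.cast_nonneg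
  have ha : (r - L) / (2 * L / √d) = (r - L) * √d / (2 * L) := by field_simp
  have hb : (r + L) / (2 * L / √d) = (r + L) * √d / (2 * L) := by field_simp
  have ha0 : 0 < (r - L) * √d / (2 * L) := by
    have : 0 < r - L := by linarith
    positivity
  refine (Nat.cast_le.2 card_image_le).trans ?_
  rw [ha, hb]
  refine (card_latticeShell_le hd ha0 (by gcongr; linarith)).trans ?_
  have hsq : ((r + L) * √d / (2 * L)) ^ 2 - ((r - L) * √d / (2 * L)) ^ 2 = r * d / L := by
    field_simp
    rw [hsd2]
    ring
  gcongr ?_ * ?_ * ?_ ^ _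
  · have : 0 ≤ r + L := by linarith
    positivity
  · rw [hsq, add_le_add_iff_right, div_le_iff₀ ha0]
    field_simp
    nlinarith
  · have : 0 ≤ r + L := by linarith
    positivity
  · field_simp
    nlinarith

lemma exists_crosses_of_mem_shellCentres (hd : 1 ≤ d) (hL : 0 < L)
    {Γ : Set (EuclideanSpace ℝ (Fin d))} (hΓ : IsPreconnected Γ) {p q : EuclideanSpace ℝ (Fin d)}
    (hp : p ∈ Γ) (hq : q ∈ Γ) (hpr : ‖p‖ + (2 * √d + 1) * L ≤ r) (hqr : r ≤ ‖q‖) :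
    ∃ z ∈ shellCentres d L r, Crosses d Γ z L := by
  have hsd : 0 < √(d : ℝ) := Real.sqrt_pos.2 (by exact_mod_cast hd)
  have hε : 0 ≤ (2 * √(d : ℝ) + 1) * L := by positivity
  obtain ⟨x, hx, hxr⟩ :=
    hΓ.intermediate_value hp hq continuous_norm.continuousOn ⟨by linarith, hqr⟩
  obtain ⟨z, hz, hxz⟩ := exists_mem_shellCentres_norm_ofLp_sub_le hd hL hxr
  obtain ⟨-, -, hzr, -⟩ := (mem_shellCentres hd hL).1 hz
  refine ⟨z, hz, crosses_of_isPreconnected hd hΓ hL hx hp hxz ?_⟩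
  refine le_of_mul_le_mul_left ?_ hsd
  calc √d * (2 * L) ≤ ‖z‖ - ‖p‖ := by linarith
    _ ≤ ‖p - z‖ := by rw [norm_sub_rev]; exact norm_sub_norm_le z p
    _ ≤ √d * ‖(p - z).ofLp‖ := norm_le_sqrt_mul_norm_ofLp _

lemma abs_norm_add_sub_le_of_mem_shellCentres (hd : 1 ≤ d) (hL : 0 < L)
    {z w : EuclideanSpace ℝ (Fin d)} (hz : z ∈ shellCentres d L r) (hw : w ∈ annulusSet d L) :
    |‖z + w‖ - r| ≤ (2 * √d + 1) * L := by
  obtain ⟨-, -, hz₁, hz₂⟩ := (mem_shellCentres hd hL).1 hz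
  have hw' := norm_le_of_mem_annulusSet hL.le hw
  have := norm_add_le z w
  have := norm_sub_le (z + w) w
  rw [add_sub_cancel_right] at this
  exact abs_le.2 ⟨by linarith, by linarith⟩

lemma abs_sub_le_norm_sub_of_mem_shellCentres (hd : 1 ≤ d) (hL : 0 < L) {r' : ℝ}
    {z z' w w' : EuclideanSpace ℝ (Fin d)} (hz : z ∈ shellCentres d L r)
    (hz' : z' ∈ shellCentres d L r') (hw : w ∈ annulusSet d L) (hw' : w' ∈ annulusSet d L) :
    |r - r'| ≤ ‖(z + w) - (z' + w')‖ + 2 * ((2 * √d + 1) * L) := by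
  have h := abs_norm_add_sub_le_of_mem_shellCentres hd hL hz hw
  have h' := abs_norm_add_sub_le_of_mem_shellCentres hd hL hz' hw'
  have := abs_norm_sub_norm_le (z + w) (z' + w')
  rw [abs_le] at *
  constructor <;> linarith

lemma le_norm_sub_of_mem_shellCentres_add_one_mul (hd : 1 ≤ d) (hL : 0 < L) {M : ℝ}
    (hM : 6 * √d ≤ M) {k k' : ℕ} (hk : k ≠ k') {z z' w w' : EuclideanSpace ℝ (Fin d)}
    (hz : z ∈ shellCentres d L ((k + 1) * (6 * M * L)))
    (hz' : z' ∈ shellCentres d L ((k' + 1) * (6 * M * L)))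
    (hw : w ∈ annulusSet d L) (hw' : w' ∈ annulusSet d L) :
    (M - 4 * √d) * L * |(k : ℝ) - k'| ≤ ‖(z + w) - (z' + w')‖ := by
  have hsd : 1 ≤ √(d : ℝ) := Real.one_le_sqrt.2 (by exact_mod_cast hd)
  have hM0 : 0 < M := by linarith
  have hML : 0 < 6 * M * L := by positivity
  have hsep := abs_sub_le_norm_sub_of_mem_shellCentres hd hL hz hz' hw hw'
  have ht : (1 : ℝ) ≤ |(k : ℝ) - k'| := by
    have h := Int.cast_le (R := ℝ) |>.2 (Int.one_le_abs (sub_ne_zero.2 (Int.ofNat_inj.not.2 hk)))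
    rwa [Int.cast_abs, Int.cast_sub, Int.cast_natCast, Int.cast_natCast, Int.cast_one] at h
  rw [show (k + 1) * (6 * M * L) - (k' + 1) * (6 * M * L) = 6 * M * L * ((k : ℝ) - k') by ring,
    abs_mul, abs_of_pos hML] at hsep
  nlinarith [mul_le_mul_of_nonneg_left ht (by positivity : 0 ≤ (5 * M + 4 * √d) * L)]

end shellCentres

lemma add_one_mul_le_of_lt_floor_div {c x : ℝ} (hc : 0 < c) {k : ℕ} (hk : k < ⌊x / c⌋₊) :
    (k + 1) * c ≤ x := by
  rw [← le_div_iff₀ hc]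
  exact_mod_cast (Nat.le_floor_iff' k.succ_ne_zero).1 hk

/-- there is a dimensional constant `c ≥ 1` such that for all
`R, M, L ≥ 6√d`, setting `n = ⌊R/(6ML)⌋`, there are `n` collections of at most
`c (R/L)^{d-1}` translated copies of `A^∞(L)`, the `k₁`-th and `k₂`-th collections being
`(M - 4√d) L |k₁ - k₂|`-separated, such that every continuous path touching both `∂B(1)`
and `∂B(R)` crosses at least one annulus in each collection. -/
theorem statement15 (d : ℕ) (hd : 1 ≤ d) :
    ∃ c : ℝ, 1 ≤ c ∧ ∀ R M L : ℝ,
      6 * Real.sqrt d ≤ R → 6 * Real.sqrt d ≤ M → 6 * Real.sqrt d ≤ L →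
      ∃ (m : Fin (Nat.floor (R / (6 * M * L))) → ℕ)
        (z : ∀ k, Fin (m k) → EuclideanSpace ℝ (Fin d)),
        (∀ k, (m k : ℝ) ≤ c * (R / L) ^ (d - 1)) ∧
        (∀ k₁ k₂, k₁ ≠ k₂ → ∀ (i : Fin (m k₁)) (j : Fin (m k₂)),
          ∀ p ∈ (fun w => z k₁ i + w) '' annulusSet d L,
          ∀ q ∈ (fun w => z k₂ j + w) '' annulusSet d L,
            (M - 4 * Real.sqrt d) * L * |((k₁ : ℕ) : ℝ) - ((k₂ : ℕ) : ℝ)| ≤ ‖p - q‖) ∧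
        (∀ γ : ℝ → EuclideanSpace ℝ (Fin d), ContinuousOn γ (Set.Icc 0 1) →
          (γ '' Set.Icc 0 1 ∩ Metric.sphere 0 1).Nonempty →
          (γ '' Set.Icc 0 1 ∩ Metric.sphere 0 R).Nonempty →
          ∀ k, ∃ i : Fin (m k), Crosses d (γ '' Set.Icc 0 1) (z k i) L) := by
  have hsd : 1 ≤ √(d : ℝ) := Real.one_le_sqrt.2 (by exact_mod_cast hd)
  refine ⟨d * (4 * d + 2) * (3 * √d) ^ (d - 1), ?_, fun R M L hR hM hL => ?_⟩
  · have hd' : (1 : ℝ) ≤ d := by exact_mod_cast hd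
    exact one_le_mul_of_one_le_of_one_le (one_le_mul_of_one_le_of_one_le hd' (by linarith))
      (one_le_pow₀ (by linarith))
  have hL0 : 0 < L := by linarith
  have hM0 : 0 < M := by linarith
  have hML : 0 < 6 * M * L := by positivity
  set r : ℕ → ℝ := fun k => (k + 1) * (6 * M * L)
  have hr (k : Fin ⌊R / (6 * M * L)⌋₊) : 1 + (2 * √d + 1) * L ≤ r k ∧ r k ≤ R := by
    refine ⟨?_, add_one_mul_le_of_lt_floor_div hML k.2⟩
    have : 6 * M * L ≤ r k := le_mul_of_one_le_left hML.le (by simp)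
    nlinarith
  let C k := shellCentres d L (r k)
  refine ⟨fun k => #(C k), fun k i => (C k).equivFin.symm i, fun k => ?_, ?_, ?_⟩
  · calc (#(C k) : ℝ) ≤ d * (4 * d + 2) * (3 * √d * r k / L) ^ (d - 1) :=
          card_shellCentres_le hd hL0 (by nlinarith [hr k])
      _ ≤ d * (4 * d + 2) * (3 * √d * R / L) ^ (d - 1) := by gcongr; exact (hr k).2
      _ = d * (4 * d + 2) * (3 * √d) ^ (d - 1) * (R / L) ^ (d - 1) := by
          rw [mul_div_assoc, mul_pow]; ring
  · rintro k₁ k₂ hk i j _ ⟨w, hw, rfl⟩ _ ⟨w', hw', rfl⟩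
    exact le_norm_sub_of_mem_shellCentres_add_one_mul hd hL0 hM (Fin.val_injective.ne hk)
      ((C k₁).equivFin.symm i).2 ((C k₂).equivFin.symm j).2 hw hw'
  · rintro γ hγ ⟨p, hpΓ, hp⟩ ⟨q, hqΓ, hq⟩ k
    rw [mem_sphere_zero_iff_norm] at hp hq
    obtain ⟨z, hz, hcross⟩ := exists_crosses_of_mem_shellCentres (r := r k) hd hL0
      (isPreconnected_Icc.image γ hγ) hpΓ hqΓ (by linarith [hr k]) (by linarith [hr k])
    exact ⟨(C k).equivFin ⟨z, hz⟩, by simpa using hcross⟩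
end
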